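/- The bijection Π : T_ℓ → T_{[1,ℓ]} commutes with the crystal operators: for all (T, T') ∈ T_ℓ and all i ∈ ℤ, Π(f̃_i · (T ⊗ T')) = f̃_i · Π(T ⊗ T') and Π(ẽ_i · (T ⊗ T')) = ẽ_i · Π(T ⊗ T'), where Π(0) = 0 by convention and on T_{[1,ℓ]} the operator f̃_i replaces an entry i by i+1 when i occurs and i+1 does not (otherwise 0), and ẽ_i replaces i+1 by i when i+1 occurs and i does not (otherwise 0). -/

import Mathlib

/-!
If `T ∈ T_ℓ^+` has `α = α_T`, then `T` is the identity at the positions `≤ α` and its later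
entries exceed their positions, so its entries are all of `(-∞, α]` together with values
`≥ α + 2`; dually `T'` is the identity from `β = β_{T'}` on and lies strictly below the
diagonal before. As `β - 1 ≤ α`, the column `Π(T ⊗ T')` has the same entries as `T'` below
`α + 1`, the same entries as `T` above it, and never contains `α + 1`. So for `i < α` the
operators on `Π` and on `T ⊗ T'` are both governed by `T'`, for `i > α` both by `T`, and at
`i = α` the operator `f̃_α` acts (on `T`) exactly when `α` is an entry of `T'`.

When the operator does act, both sides are the modified columns spliced at one cut: `T` and
`T'` agree on `[β, α]`, so `Π` may be cut anywhere in `[β - 1, α]`, and modifying `T` lowers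
`α_T` at most to `α - 1`, which happens only for `f̃_α`.
-/

attribute [local instance] Classical.propDecidable

noncomputable section

/-- `T_ℓ^+`: strictly increasing integer sequences indexed by `j ≤ ℓ` with `i_j = j`
for `j ≪ 0`. -/
def TPlus (ℓ : ℤ) : Set (Set.Iic ℓ → ℤ) :=
  {f | StrictMono f ∧ ∃ N : ℤ, ∀ j : Set.Iic ℓ, (j : ℤ) ≤ N → f j = (j : ℤ)}

/-- `T_0^-`: strictly increasing integer sequences indexed by `p ≥ 1` with `j_p = p`
for `p ≫ 0`. -/
def TMinus : Set (Set.Ici (1 : ℤ) → ℤ) :=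
  {g | StrictMono g ∧ ∃ N : ℤ, ∀ p : Set.Ici (1 : ℤ), N ≤ (p : ℤ) → g p = (p : ℤ)}

/-- `α_T = sup {p ≤ ℓ : i_p = p}`. -/
def alphaT (ℓ : ℤ) (f : Set.Iic ℓ → ℤ) : ℤ :=
  sSup {p : ℤ | ∃ h : p ≤ ℓ, f ⟨p, h⟩ = p}

/-- `β_{T'} = inf {p ≥ 1 : j_p = p}`. -/
def betaT (g : Set.Ici (1 : ℤ) → ℤ) : ℤ :=
  sInf {p : ℤ | ∃ h : (1 : ℤ) ≤ p, g ⟨p, h⟩ = p}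

/-- `T_ℓ`: pairs `T ⊗ T'` with `T ∈ T_ℓ^+`, `T' ∈ T_0^-` and `α_T ≥ β_{T'} − 1`. -/
def TL (ℓ : ℤ) : Set ((Set.Iic ℓ → ℤ) × (Set.Ici (1 : ℤ) → ℤ)) :=
  {x | x.1 ∈ TPlus ℓ ∧ x.2 ∈ TMinus ∧ betaT x.2 - 1 ≤ alphaT ℓ x.1}

/-- `T_{[1,ℓ]}`: strictly increasing `ℓ`-tuples of integers. -/
def TRect (ℓ : ℤ) : Set (Set.Icc (1 : ℤ) ℓ → ℤ) := {h | StrictMono h}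

/-- The map `Π(T ⊗ T') = (j_1 < ⋯ < j_{α_T} < i_{α_T+1} < ⋯ < i_ℓ)`. -/
def PiMap (ℓ : ℤ) (x : (Set.Iic ℓ → ℤ) × (Set.Ici (1 : ℤ) → ℤ)) :
    Set.Icc (1 : ℤ) ℓ → ℤ :=
  fun p => if (p : ℤ) ≤ alphaT ℓ x.1 then x.2 ⟨p, p.2.1⟩ else x.1 ⟨p, p.2.2⟩

/-- `ẽ_i` is applicable to a column: `i+1` occurs among the entries and `i` does not. -/
def eApp {γ : Type*} (i : ℤ) (f : γ → ℤ) : Prop :=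
  (∃ p, f p = i + 1) ∧ ∀ p, f p ≠ i

/-- `f̃_i` is applicable to a column: `i` occurs among the entries and `i+1` does not. -/
def fApp {γ : Type*} (i : ℤ) (f : γ → ℤ) : Prop :=
  (∃ p, f p = i) ∧ ∀ p, f p ≠ i + 1

/-- Replace the entry `i+1` by `i`. -/
def eMod {γ : Type*} (i : ℤ) (f : γ → ℤ) : γ → ℤ :=
  fun j => if f j = i + 1 then i else f j

/-- Replace the entry `i` by `i+1`. -/
def fMod {γ : Type*} (i : ℤ) (f : γ → ℤ) : γ → ℤ :=
  fun j => if f j = i then i + 1 else f j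

/-- The Kashiwara operator `ẽ_i` on a column crystal, with value `none` for `0`. -/
def eCol {γ : Type*} (i : ℤ) (f : γ → ℤ) : Option (γ → ℤ) :=
  if eApp i f then some (eMod i f) else none

/-- The Kashiwara operator `f̃_i` on a column crystal, with value `none` for `0`. -/
def fCol {γ : Type*} (i : ℤ) (f : γ → ℤ) : Option (γ → ℤ) :=
  if fApp i f then some (fMod i f) else none

/-- Kashiwara's tensor product rule for `ẽ_i` on `T ⊗ T'` (here `ε_i, φ_i ∈ {0,1}`
on each factor): `ẽ_i (b₁ ⊗ b₂) = ẽ_i b₁ ⊗ b₂` if `φ_i(b₁) ≥ ε_i(b₂)`, and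
`b₁ ⊗ ẽ_i b₂` otherwise. -/
def eTen (ℓ : ℤ) (i : ℤ) (x : (Set.Iic ℓ → ℤ) × (Set.Ici (1 : ℤ) → ℤ)) :
    Option ((Set.Iic ℓ → ℤ) × (Set.Ici (1 : ℤ) → ℤ)) :=
  if fApp i x.1 ∨ ¬ eApp i x.2 then
    (if eApp i x.1 then some (eMod i x.1, x.2) else none)
  else some (x.1, eMod i x.2)

/-- Kashiwara's tensor product rule for `f̃_i` on `T ⊗ T'`:
`f̃_i (b₁ ⊗ b₂) = f̃_i b₁ ⊗ b₂` if `φ_i(b₁) > ε_i(b₂)`, and `b₁ ⊗ f̃_i b₂` otherwise. -/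
def fTen (ℓ : ℤ) (i : ℤ) (x : (Set.Iic ℓ → ℤ) × (Set.Ici (1 : ℤ) → ℤ)) :
    Option ((Set.Iic ℓ → ℤ) × (Set.Ici (1 : ℤ) → ℤ)) :=
  if fApp i x.1 ∧ ¬ eApp i x.2 then some (fMod i x.1, x.2)
  else (if fApp i x.2 then some (x.1, fMod i x.2) else none)

open Set

theorem StrictMono.monotone_sub_coe {s : Set ℤ} [s.OrdConnected] {f : s → ℤ}
    (hf : StrictMono f) : Monotone fun p => f p - p := by
  rintro ⟨a, ha⟩ ⟨b, hb⟩ (hab : a ≤ b)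
  induction b, hab using Int.leInduction with
  | base => exact le_rfl
  | succ n han ih =>
    have hn : n ∈ s := Set.OrdConnected.out' ha hb ⟨han, by omega⟩
    have hstep : f ⟨n, hn⟩ < f ⟨n + 1, hb⟩ := hf (Subtype.mk_lt_mk.2 (lt_add_one n))
    have := ih hn
    simp only at this ⊢
    omega

section Modify

variable {γ : Type*} {i : ℤ} {f : γ → ℤ}

theorem eApp_iff : eApp i f ↔ i + 1 ∈ range f ∧ i ∉ range f := by
  simp [eApp, mem_range]

theorem fApp_iff : fApp i f ↔ i ∈ range f ∧ i + 1 ∉ range f := by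
  simp [fApp, mem_range]

theorem eApp_congr {γ' : Type*} {f' : γ' → ℤ} (h₀ : i ∈ range f ↔ i ∈ range f')
    (h₁ : i + 1 ∈ range f ↔ i + 1 ∈ range f') : eApp i f ↔ eApp i f' := by
  rw [eApp_iff, eApp_iff, h₀, h₁]

theorem fApp_congr {γ' : Type*} {f' : γ' → ℤ} (h₀ : i ∈ range f ↔ i ∈ range f')
    (h₁ : i + 1 ∈ range f ↔ i + 1 ∈ range f') : fApp i f ↔ fApp i f' := by
  rw [fApp_iff, fApp_iff, h₀, h₁]

theorem eMod_apply_of_ne {p : γ} (h : f p ≠ i + 1) : eMod i f p = f p := if_neg h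

theorem fMod_apply_of_ne {p : γ} (h : f p ≠ i) : fMod i f p = f p := if_neg h

theorem mem_range_eMod_of_ne {v : ℤ} (hv : v ∈ range f) (hvi : v ≠ i + 1) :
    v ∈ range (eMod i f) := by
  obtain ⟨p, rfl⟩ := hv
  exact ⟨p, eMod_apply_of_ne hvi⟩

theorem mem_range_fMod_of_ne {v : ℤ} (hv : v ∈ range f) (hvi : v ≠ i) :
    v ∈ range (fMod i f) := by
  obtain ⟨p, rfl⟩ := hv
  exact ⟨p, fMod_apply_of_ne hvi⟩

theorem StrictMono.eMod [Preorder γ] (hf : StrictMono f) (hi : ∀ p, f p ≠ i) :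
    StrictMono (eMod i f) := by
  intro a b hab
  have := hf hab
  have := hi a
  have := hi b
  simp only [_root_.eMod]
  split_ifs <;> omega

theorem StrictMono.fMod [Preorder γ] (hf : StrictMono f) (hi : ∀ p, f p ≠ i + 1) :
    StrictMono (fMod i f) := by
  intro a b hab
  have := hf hab
  have := hi a
  have := hi b
  simp only [_root_.fMod]
  split_ifs <;> omega

end Modify

namespace TPlus

variable {ℓ : ℤ} {f : Iic ℓ → ℤ}

theorem le_apply (hf : f ∈ TPlus ℓ) (p : Iic ℓ) : (p : ℤ) ≤ f p := by
  obtain ⟨hmono, N, hN⟩ := hf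
  let q : Iic ℓ := ⟨min p N, mem_Iic.2 ((min_le_left _ _).trans p.2)⟩
  have := hmono.monotone_sub_coe (show q ≤ p from min_le_left (p : ℤ) N)
  have := hN q (min_le_right _ _)
  simp only at *
  omega

theorem exists_apply_alphaT (hf : f ∈ TPlus ℓ) :
    ∃ h : alphaT ℓ f ≤ ℓ, f ⟨alphaT ℓ f, h⟩ = alphaT ℓ f := by
  obtain ⟨-, N, hN⟩ := hf
  exact Int.csSup_mem (s := {p : ℤ | ∃ h : p ≤ ℓ, f ⟨p, h⟩ = p})
    ⟨min N ℓ, min_le_right _ _, hN _ (min_le_left _ _)⟩ ⟨ℓ, fun _ hp => hp.1⟩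

theorem alphaT_le (hf : f ∈ TPlus ℓ) : alphaT ℓ f ≤ ℓ :=
  (exists_apply_alphaT hf).1

theorem apply_eq_of_le_alphaT (hf : f ∈ TPlus ℓ) (p : Iic ℓ) (hp : (p : ℤ) ≤ alphaT ℓ f) :
    f p = p := by
  obtain ⟨hα, hfα⟩ := exists_apply_alphaT hf
  have := hf.1.monotone_sub_coe (show p ≤ ⟨alphaT ℓ f, hα⟩ from hp)
  have := le_apply hf p
  simp only [hfα] at *
  omega

theorem lt_apply_of_alphaT_lt (hf : f ∈ TPlus ℓ) (p : Iic ℓ) (hp : alphaT ℓ f < p) :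
    (p : ℤ) < f p :=
  (le_apply hf p).lt_of_ne fun h =>
    hp.not_ge (le_csSup ⟨ℓ, fun _ hq => hq.1⟩ ⟨p.2, h.symm⟩)

theorem mem_range_of_le_alphaT (hf : f ∈ TPlus ℓ) {v : ℤ} (hv : v ≤ alphaT ℓ f) :
    v ∈ range f :=
  ⟨⟨v, hv.trans (alphaT_le hf)⟩, apply_eq_of_le_alphaT hf _ hv⟩

theorem alphaT_add_one_notMem_range (hf : f ∈ TPlus ℓ) : alphaT ℓ f + 1 ∉ range f := by
  rintro ⟨p, hp⟩
  by_cases h : (p : ℤ) ≤ alphaT ℓ f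
  · have := apply_eq_of_le_alphaT hf p h
    omega
  · have := lt_apply_of_alphaT_lt hf p (not_le.1 h)
    omega

theorem le_alphaT_of_Iic_subset_range (hf : f ∈ TPlus ℓ) {a : ℤ} (h : Iic a ⊆ range f) :
    a ≤ alphaT ℓ f := by
  by_contra! ha
  exact alphaT_add_one_notMem_range hf (h (show alphaT ℓ f + 1 ≤ a by omega))

theorem eMod_mem (hf : f ∈ TPlus ℓ) {i : ℤ} (hi : ∀ p, f p ≠ i) : eMod i f ∈ TPlus ℓ := by
  obtain ⟨hmono, N, hN⟩ := hf
  refine ⟨hmono.eMod hi, min N i, fun j hj => ?_⟩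
  rw [eMod_apply_of_ne] <;> rw [hN j (hj.trans (min_le_left _ _))]
  have := min_le_right N i
  omega

theorem fMod_mem (hf : f ∈ TPlus ℓ) {i : ℤ} (hi : ∀ p, f p ≠ i + 1) : fMod i f ∈ TPlus ℓ := by
  obtain ⟨hmono, N, hN⟩ := hf
  refine ⟨hmono.fMod hi, min N (i - 1), fun j hj => ?_⟩
  rw [fMod_apply_of_ne] <;> rw [hN j (hj.trans (min_le_left _ _))]
  have := min_le_right N (i - 1)
  omega

end TPlus

namespace TMinus

variable {g : Ici (1 : ℤ) → ℤ}

theorem apply_le (hg : g ∈ TMinus) (q : Ici (1 : ℤ)) : g q ≤ q := by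
  obtain ⟨hmono, N, hN⟩ := hg
  let r : Ici (1 : ℤ) := ⟨max q N, mem_Ici.2 (q.2.trans (le_max_left _ _))⟩
  have := hmono.monotone_sub_coe (show q ≤ r from le_max_left (q : ℤ) N)
  have := hN r (le_max_right _ _)
  simp only at *
  omega

theorem exists_apply_betaT (hg : g ∈ TMinus) :
    ∃ h : 1 ≤ betaT g, g ⟨betaT g, h⟩ = betaT g := by
  obtain ⟨-, N, hN⟩ := hg
  exact Int.csInf_mem (s := {p : ℤ | ∃ h : (1 : ℤ) ≤ p, g ⟨p, h⟩ = p})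
    ⟨max N 1, le_max_right _ _, hN _ (le_max_left _ _)⟩ ⟨1, fun _ hp => hp.1⟩

theorem one_le_betaT (hg : g ∈ TMinus) : 1 ≤ betaT g :=
  (exists_apply_betaT hg).1

theorem apply_eq_of_betaT_le (hg : g ∈ TMinus) (q : Ici (1 : ℤ)) (hq : betaT g ≤ q) :
    g q = q := by
  obtain ⟨hβ, hgβ⟩ := exists_apply_betaT hg
  have := hg.1.monotone_sub_coe (show ⟨betaT g, hβ⟩ ≤ q from hq)
  have := apply_le hg q
  simp only [hgβ] at *
  omega

theorem apply_lt_of_lt_betaT (hg : g ∈ TMinus) (q : Ici (1 : ℤ)) (hq : q < betaT g) :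
    g q < q :=
  (apply_le hg q).lt_of_ne fun h =>
    hq.not_ge (csInf_le ⟨1, fun _ hr => hr.1⟩ ⟨q.2, h⟩)

theorem mem_range_of_betaT_le (hg : g ∈ TMinus) {v : ℤ} (hv : betaT g ≤ v) : v ∈ range g :=
  ⟨⟨v, (one_le_betaT hg).trans hv⟩, apply_eq_of_betaT_le hg _ hv⟩

theorem betaT_sub_one_notMem_range (hg : g ∈ TMinus) : betaT g - 1 ∉ range g := by
  rintro ⟨q, hq⟩
  by_cases h : betaT g ≤ q
  · have := apply_eq_of_betaT_le hg q h
    omega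
  · have := apply_lt_of_lt_betaT hg q (not_le.1 h)
    omega

end TMinus

def spliceAt (ℓ c : ℤ) (f : Iic ℓ → ℤ) (g : Ici (1 : ℤ) → ℤ) : Icc (1 : ℤ) ℓ → ℤ :=
  fun p => if (p : ℤ) ≤ c then g ⟨p, p.2.1⟩ else f ⟨p, p.2.2⟩

theorem PiMap_def (ℓ : ℤ) (f : Iic ℓ → ℤ) (g : Ici (1 : ℤ) → ℤ) :
    PiMap ℓ (f, g) = spliceAt ℓ (alphaT ℓ f) f g :=
  rfl

section Splice

variable {ℓ c : ℤ} {f f' : Iic ℓ → ℤ} {g g' : Ici (1 : ℤ) → ℤ}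

theorem eMod_spliceAt (i : ℤ) :
    eMod i (spliceAt ℓ c f g) = spliceAt ℓ c (eMod i f) (eMod i g) := by
  funext p
  simp only [eMod, spliceAt]
  split_ifs <;> rfl

theorem fMod_spliceAt (i : ℤ) :
    fMod i (spliceAt ℓ c f g) = spliceAt ℓ c (fMod i f) (fMod i g) := by
  funext p
  simp only [fMod, spliceAt]
  split_ifs <;> rfl

theorem spliceAt_congr (hf : ∀ p : Iic ℓ, c < p → f p = f' p)
    (hg : ∀ q : Ici (1 : ℤ), (q : ℤ) ≤ c → g q = g' q) :
    spliceAt ℓ c f g = spliceAt ℓ c f' g' := by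
  funext p
  simp only [spliceAt]
  split_ifs with hp
  · exact hg _ hp
  · exact hf _ (not_le.1 hp)

/-- Both columns are the identity on `[β_{T'}, α_T]`. -/
theorem PiMap_eq_spliceAt (hf : f ∈ TPlus ℓ) (hg : g ∈ TMinus) (hβc : betaT g - 1 ≤ c)
    (hcα : c ≤ alphaT ℓ f) : PiMap ℓ (f, g) = spliceAt ℓ c f g := by
  funext p
  simp only [PiMap, spliceAt]
  split_ifs with hpα hpc hpc
  · rfl
  · rw [TPlus.apply_eq_of_le_alphaT hf _ hpα, TMinus.apply_eq_of_betaT_le hg _ (by simp; omega)]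
  · omega
  · rfl

end Splice

section PiMap

variable {ℓ : ℤ} {f : Iic ℓ → ℤ} {g : Ici (1 : ℤ) → ℤ}

theorem prodMk_mem_TL :
    (f, g) ∈ TL ℓ ↔ f ∈ TPlus ℓ ∧ g ∈ TMinus ∧ betaT g - 1 ≤ alphaT ℓ f :=
  Iff.rfl

theorem mem_range_PiMap_iff_of_le_alphaT (hx : (f, g) ∈ TL ℓ) {v : ℤ} (hv : v ≤ alphaT ℓ f) :
    v ∈ range (PiMap ℓ (f, g)) ↔ v ∈ range g := by
  obtain ⟨hf, hg, hβα⟩ := prodMk_mem_TL.1 hx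
  constructor
  · rintro ⟨p, rfl⟩
    by_cases hp : (p : ℤ) ≤ alphaT ℓ f
    · exact ⟨_, (if_pos hp).symm⟩
    · have : (p : ℤ) < f ⟨p, p.2.2⟩ := TPlus.lt_apply_of_alphaT_lt hf _ (not_le.1 hp)
      simp only [PiMap, if_neg hp] at hv
      omega
  · rintro ⟨q, rfl⟩
    have hq : (q : ℤ) ≤ alphaT ℓ f := by
      by_contra! hq
      have := TMinus.apply_eq_of_betaT_le hg q (by omega)
      omega
    exact ⟨⟨q, q.2, hq.trans (TPlus.alphaT_le hf)⟩, if_pos hq⟩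

theorem mem_range_PiMap_iff_of_alphaT_lt (hx : (f, g) ∈ TL ℓ) {v : ℤ} (hv : alphaT ℓ f < v) :
    v ∈ range (PiMap ℓ (f, g)) ↔ v ∈ range f := by
  obtain ⟨hf, hg, hβα⟩ := prodMk_mem_TL.1 hx
  constructor
  · rintro ⟨p, rfl⟩
    by_cases hp : (p : ℤ) ≤ alphaT ℓ f
    · have : g ⟨p, p.2.1⟩ ≤ p := TMinus.apply_le hg _
      simp only [PiMap, if_pos hp] at hv
      omega
    · exact ⟨_, (if_neg hp).symm⟩
  · rintro ⟨p, rfl⟩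
    have hp : alphaT ℓ f < p := by
      by_contra! hp
      have := TPlus.apply_eq_of_le_alphaT hf p hp
      omega
    have := TMinus.one_le_betaT hg
    exact ⟨⟨p, by omega, p.2⟩, if_neg hp.not_ge⟩

variable {i : ℤ}

theorem PiMap_eMod_snd (hf : f ∈ TPlus ℓ) (hi : i < alphaT ℓ f) :
    PiMap ℓ (f, eMod i g) = eMod i (PiMap ℓ (f, g)) := by
  rw [PiMap_def, PiMap_def, eMod_spliceAt]
  refine spliceAt_congr (fun p hp => (eMod_apply_of_ne ?_).symm) fun _ _ => rfl
  have := TPlus.lt_apply_of_alphaT_lt hf p hp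
  omega

theorem PiMap_fMod_snd (hf : f ∈ TPlus ℓ) (hi : i < alphaT ℓ f) :
    PiMap ℓ (f, fMod i g) = fMod i (PiMap ℓ (f, g)) := by
  rw [PiMap_def, PiMap_def, fMod_spliceAt]
  refine spliceAt_congr (fun p hp => (fMod_apply_of_ne ?_).symm) fun _ _ => rfl
  have := TPlus.lt_apply_of_alphaT_lt hf p hp
  omega

theorem PiMap_eMod_fst (hx : (f, g) ∈ TL ℓ) (hi : alphaT ℓ f < i) (happ : ∀ p, f p ≠ i) :
    PiMap ℓ (eMod i f, g) = eMod i (PiMap ℓ (f, g)) := by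
  obtain ⟨hf, hg, hβα⟩ := prodMk_mem_TL.1 hx
  have hf' := TPlus.eMod_mem hf happ
  have hα : alphaT ℓ f ≤ alphaT ℓ (eMod i f) :=
    TPlus.le_alphaT_of_Iic_subset_range hf' fun v (hv : v ≤ _) =>
      mem_range_eMod_of_ne (TPlus.mem_range_of_le_alphaT hf hv) (by omega)
  rw [PiMap_eq_spliceAt hf' hg hβα hα, PiMap_def, eMod_spliceAt]
  refine spliceAt_congr (fun _ _ => rfl) fun q hq => (eMod_apply_of_ne ?_).symm
  have := TMinus.apply_le hg q
  omega

theorem PiMap_fMod_fst (hx : (f, g) ∈ TL ℓ) (hi : alphaT ℓ f < i) (happ : ∀ p, f p ≠ i + 1) :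
    PiMap ℓ (fMod i f, g) = fMod i (PiMap ℓ (f, g)) := by
  obtain ⟨hf, hg, hβα⟩ := prodMk_mem_TL.1 hx
  have hf' := TPlus.fMod_mem hf happ
  have hα : alphaT ℓ f ≤ alphaT ℓ (fMod i f) :=
    TPlus.le_alphaT_of_Iic_subset_range hf' fun v (hv : v ≤ _) =>
      mem_range_fMod_of_ne (TPlus.mem_range_of_le_alphaT hf hv) (by omega)
  rw [PiMap_eq_spliceAt hf' hg hβα hα, PiMap_def, fMod_spliceAt]
  refine spliceAt_congr (fun _ _ => rfl) fun q hq => (fMod_apply_of_ne ?_).symm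
  have := TMinus.apply_le hg q
  omega

/-- Raising the entry `α_T` of `T` moves the cut of `Π` down by one. -/
theorem PiMap_fMod_alphaT_fst (hf : f ∈ TPlus ℓ) (hg : g ∈ TMinus)
    (hβα : betaT g ≤ alphaT ℓ f) :
    PiMap ℓ (fMod (alphaT ℓ f) f, g) = fMod (alphaT ℓ f) (PiMap ℓ (f, g)) := by
  set α := alphaT ℓ f
  have hf' : fMod α f ∈ TPlus ℓ :=
    TPlus.fMod_mem hf fun p hp => TPlus.alphaT_add_one_notMem_range hf ⟨p, hp⟩
  have hα : α - 1 ≤ alphaT ℓ (fMod α f) :=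
    TPlus.le_alphaT_of_Iic_subset_range hf' fun v (hv : v ≤ _) =>
      mem_range_fMod_of_ne (TPlus.mem_range_of_le_alphaT hf (by omega)) (by omega)
  rw [PiMap_eq_spliceAt hf' hg (by omega) hα,
    PiMap_eq_spliceAt (c := α - 1) hf hg (by omega) (by omega), fMod_spliceAt]
  refine spliceAt_congr (fun _ _ => rfl) fun q hq => (fMod_apply_of_ne ?_).symm
  have := TMinus.apply_le hg q
  omega

theorem PiMap_eTen (hx : (f, g) ∈ TL ℓ) (i : ℤ) :
    Option.map (PiMap ℓ) (eTen ℓ i (f, g)) = eCol i (PiMap ℓ (f, g)) := by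
  obtain ⟨hf, hg, hβα⟩ := prodMk_mem_TL.1 hx
  rcases lt_trichotomy i (alphaT ℓ f) with hi | rfl | hi
  · have hne : ¬ eApp i f := fun h =>
      (eApp_iff.1 h).2 (TPlus.mem_range_of_le_alphaT hf hi.le)
    have hnf : ¬ fApp i f := fun h =>
      (fApp_iff.1 h).2 (TPlus.mem_range_of_le_alphaT hf hi)
    have happ : eApp i (PiMap ℓ (f, g)) ↔ eApp i g :=
      eApp_congr (mem_range_PiMap_iff_of_le_alphaT hx hi.le)
        (mem_range_PiMap_iff_of_le_alphaT hx hi)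
    by_cases hge : eApp i g
    · simp [eTen, eCol, hnf, hge, happ, PiMap_eMod_snd hf hi]
    · simp [eTen, eCol, hne, hge, happ]
  · have hfa : fApp (alphaT ℓ f) f := fApp_iff.2
      ⟨TPlus.mem_range_of_le_alphaT hf le_rfl, TPlus.alphaT_add_one_notMem_range hf⟩
    have hne : ¬ eApp (alphaT ℓ f) f := fun h => (eApp_iff.1 h).2 (fApp_iff.1 hfa).1
    have hnP : ¬ eApp (alphaT ℓ f) (PiMap ℓ (f, g)) := fun h =>
      TPlus.alphaT_add_one_notMem_range hf
        ((mem_range_PiMap_iff_of_alphaT_lt hx (lt_add_one _)).1 (eApp_iff.1 h).1)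
    simp [eTen, eCol, hfa, hne, hnP]
  · have hng : ¬ eApp i g := fun h =>
      (eApp_iff.1 h).2 (TMinus.mem_range_of_betaT_le hg (by omega))
    have happ : eApp i (PiMap ℓ (f, g)) ↔ eApp i f :=
      eApp_congr (mem_range_PiMap_iff_of_alphaT_lt hx hi)
        (mem_range_PiMap_iff_of_alphaT_lt hx (by omega))
    by_cases hef : eApp i f
    · simp [eTen, eCol, hng, hef, happ, PiMap_eMod_fst hx hi hef.2]
    · simp [eTen, eCol, hng, hef, happ]

theorem PiMap_fTen (hx : (f, g) ∈ TL ℓ) (i : ℤ) :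
    Option.map (PiMap ℓ) (fTen ℓ i (f, g)) = fCol i (PiMap ℓ (f, g)) := by
  obtain ⟨hf, hg, hβα⟩ := prodMk_mem_TL.1 hx
  rcases lt_trichotomy i (alphaT ℓ f) with hi | rfl | hi
  · have hnf : ¬ fApp i f := fun h =>
      (fApp_iff.1 h).2 (TPlus.mem_range_of_le_alphaT hf hi)
    have happ : fApp i (PiMap ℓ (f, g)) ↔ fApp i g :=
      fApp_congr (mem_range_PiMap_iff_of_le_alphaT hx hi.le)
        (mem_range_PiMap_iff_of_le_alphaT hx hi)
    by_cases hfg : fApp i g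
    · simp [fTen, fCol, hnf, hfg, happ, PiMap_fMod_snd hf hi]
    · simp [fTen, fCol, hnf, hfg, happ]
  · have hfa : fApp (alphaT ℓ f) f := fApp_iff.2
      ⟨TPlus.mem_range_of_le_alphaT hf le_rfl, TPlus.alphaT_add_one_notMem_range hf⟩
    have happ : fApp (alphaT ℓ f) (PiMap ℓ (f, g)) ↔ alphaT ℓ f ∈ range g := by
      rw [fApp_iff, mem_range_PiMap_iff_of_le_alphaT hx le_rfl,
        mem_range_PiMap_iff_of_alphaT_lt hx (lt_add_one _)]
      simp [TPlus.alphaT_add_one_notMem_range hf]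
    have hg₁ : alphaT ℓ f + 1 ∈ range g := TMinus.mem_range_of_betaT_le hg (by omega)
    by_cases hβ : betaT g ≤ alphaT ℓ f
    · have hg₀ : alphaT ℓ f ∈ range g := TMinus.mem_range_of_betaT_le hg hβ
      simp [fTen, fCol, eApp_iff, hfa, hg₀, happ, PiMap_fMod_alphaT_fst hf hg hβ]
    · have hg₀ : alphaT ℓ f ∉ range g := by
        rw [show alphaT ℓ f = betaT g - 1 by omega]
        exact TMinus.betaT_sub_one_notMem_range hg
      have hge : eApp (alphaT ℓ f) g := eApp_iff.2 ⟨hg₁, hg₀⟩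
      have hnfg : ¬ fApp (alphaT ℓ f) g := fun h => hg₀ (fApp_iff.1 h).1
      simp [fTen, fCol, hge, hnfg, hg₀, happ]
  · have hg₁ : i + 1 ∈ range g := TMinus.mem_range_of_betaT_le hg (by omega)
    have hng : ¬ fApp i g := fun h => (fApp_iff.1 h).2 hg₁
    have hneg : ¬ eApp i g := fun h =>
      (eApp_iff.1 h).2 (TMinus.mem_range_of_betaT_le hg (by omega))
    have happ : fApp i (PiMap ℓ (f, g)) ↔ fApp i f :=
      fApp_congr (mem_range_PiMap_iff_of_alphaT_lt hx hi)
        (mem_range_PiMap_iff_of_alphaT_lt hx (by omega))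
    by_cases hff : fApp i f
    · simp [fTen, fCol, hneg, hff, happ, PiMap_fMod_fst hx hi hff.2]
    · simp [fTen, fCol, hng, hff, happ]

end PiMap

theorem PiMap_commutes_with_crystal_ops_general (ℓ : ℤ) :
    ∀ x ∈ TL ℓ, ∀ i : ℤ,
      Option.map (PiMap ℓ) (eTen ℓ i x) = eCol i (PiMap ℓ x) ∧
      Option.map (PiMap ℓ) (fTen ℓ i x) = fCol i (PiMap ℓ x) := by
  rintro ⟨f, g⟩ hx i
  exact ⟨PiMap_eTen hx i, PiMap_fTen hx i⟩

/-- The bijection `Π : T_ℓ → T_{[1,ℓ]}` commutes with the crystal operators: for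
`x ∈ T_ℓ` and `i ∈ ℤ`, `Π(ẽ_i · x) = ẽ_i · Π(x)` and `Π(f̃_i · x) = f̃_i · Π(x)`,
where on `T_{[1,ℓ]}` the operator `ẽ_i` replaces `i+1` by `i` (when `i+1` occurs
and `i` does not, otherwise `0`), `f̃_i` replaces `i` by `i+1` (when `i` occurs
and `i+1` does not, otherwise `0`), and `Π(0) = 0` by convention. -/
theorem PiMap_commutes_with_crystal_ops (ℓ : ℤ) (hl : 1 ≤ ℓ) :
    ∀ x ∈ TL ℓ, ∀ i : ℤ,
      Option.map (PiMap ℓ) (eTen ℓ i x) = eCol i (PiMap ℓ x) ∧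
      Option.map (PiMap ℓ) (fTen ℓ i x) = fCol i (PiMap ℓ x) :=
  PiMap_commutes_with_crystal_ops_general ℓ
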